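/- arXiv:math/0404113 — 6 statements merged into one kernel-verified Lean document; each statement's English description precedes it below -/
import Mathlib

section
/- For natural numbers k, ℓ, m, n with k < ℓ ≤ m ≤ n, we have C(n,k)·C(m,ℓ) ≤ C(n,ℓ)·C(m,k), where C denotes the binomial coefficient. -/
lemma step_choose (k l n : ℕ) (hkl : k < l) (hln : l ≤ n) :
    (n+1).choose k * n.choose l ≤ (n+1).choose l * n.choose k := by
  have hl : 0 < n + 1 - l := by omega
  apply Nat.le_of_mul_le_mul_right _ hl
  calc (n+1).choose k * n.choose l * (n+1-l)
      ≤ (n+1).choose k * n.choose l * (n+1-k) := by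
        apply Nat.mul_le_mul_left; omega
    _ = (n+1).choose k * (n+1-k) * n.choose l := by ring
    _ = n.choose k * (n+1) * n.choose l := by rw [← Nat.choose_mul_succ_eq]
    _ = n.choose l * (n+1) * n.choose k := by ring
    _ = (n+1).choose l * (n+1-l) * n.choose k := by rw [Nat.choose_mul_succ_eq]
    _ = (n+1).choose l * n.choose k * (n+1-l) := by ring

theorem stmt_0 (k l m n : ℕ) (hkl : k < l) (hlm : l ≤ m) (hmn : m ≤ n) :
    n.choose k * m.choose l ≤ n.choose l * m.choose k := by
  induction n, hmn using Nat.le_induction with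
  | base => rw [Nat.mul_comm]
  | succ n hmn ih =>
    have hln : l ≤ n := le_trans hlm hmn
    have hA := step_choose k l n hkl hln
    have hpos : 0 < n.choose l * n.choose k :=
      Nat.mul_pos (Nat.choose_pos hln) (Nat.choose_pos (le_trans hkl.le hln))
    apply Nat.le_of_mul_le_mul_right _ hpos
    calc (n+1).choose k * m.choose l * (n.choose l * n.choose k)
        = ((n+1).choose k * n.choose l) * (n.choose k * m.choose l) := by ring
      _ ≤ ((n+1).choose l * n.choose k) * (n.choose l * m.choose k) :=
          Nat.mul_le_mul hA ih
      _ = (n+1).choose l * m.choose k * (n.choose l * n.choose k) := by ring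
end

section
/- The limit as n → ∞ of C(n,α)² / C(2n,2α) equals C(2α,α) / 2^(2α), for every fixed positive integer α. -/
open Finset Filter

lemma choose_cast_mul (n k : ℕ) (h : k ≤ n) :
    (n.choose k : ℝ) * (Nat.factorial k : ℝ) = ∏ i ∈ range k, ((n : ℝ) - i) := by
  have h1 : ((n.descFactorial k : ℕ) : ℝ) = (Nat.factorial k : ℝ) * (n.choose k : ℝ) := by
    rw [Nat.descFactorial_eq_factorial_mul_choose]; push_cast; ring
  have h2 : ((n.descFactorial k : ℕ) : ℝ) = ∏ i ∈ range k, ((n : ℝ) - i) := by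
    rw [Nat.descFactorial_eq_prod_range]
    push_cast
    refine Finset.prod_congr rfl fun i hi => ?_
    rw [Nat.cast_sub (le_of_lt (lt_of_lt_of_le (mem_range.mp hi) h))]
  rw [mul_comm, ← h1, h2]

lemma prod_factor_out (k : ℕ) (x : ℝ) (hx : x ≠ 0) :
    ∏ i ∈ range k, (x - i) = x ^ k * ∏ i ∈ range k, (1 - (i : ℝ) / x) := by
  have h : x ^ k * ∏ i ∈ range k, (1 - (i : ℝ) / x) = ∏ i ∈ range k, (x * (1 - (i : ℝ) / x)) := by
    rw [Finset.prod_mul_distrib, Finset.prod_const, Finset.card_range]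
  rw [h]
  refine Finset.prod_congr rfl fun i _ => ?_
  field_simp

lemma prod_ratio_tendsto (k : ℕ) :
    Tendsto (fun n : ℕ => ∏ i ∈ range k, (1 - (i : ℝ) / n)) atTop (nhds 1) := by
  have : Tendsto (fun n : ℕ => ∏ i ∈ range k, (1 - (i : ℝ) / n)) atTop
      (nhds (∏ _i ∈ range k, (1 : ℝ))) := by
    apply tendsto_finset_prod
    intro i _
    have hd : Tendsto (fun n : ℕ => (i : ℝ) / n) atTop (nhds 0) :=
      Tendsto.div_atTop tendsto_const_nhds tendsto_natCast_atTop_atTop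
    simpa using tendsto_const_nhds.sub hd
  simpa using this

theorem stmt_4 (α : ℕ) (hα : 1 ≤ α) :
    Filter.Tendsto (fun n : ℕ => ((n.choose α : ℝ)) ^ 2 / ((2 * n).choose (2 * α)))
      Filter.atTop (nhds (((2 * α).choose α : ℝ) / 2 ^ (2 * α))) := by
  set c : ℝ := ((2 * α).choose α : ℝ) / 2 ^ (2 * α) with hc
  have hmain : Tendsto
      (fun n : ℕ => c * (∏ i ∈ range α, (1 - (i : ℝ) / n)) ^ 2 /
        (∏ i ∈ range (2 * α), (1 - (i : ℝ) / (2 * n)))) atTop (nhds c) := by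
    have h1 := prod_ratio_tendsto α
    have h2 : Tendsto (fun n : ℕ => ∏ i ∈ range (2 * α), (1 - (i : ℝ) / (2 * n)))
        atTop (nhds 1) := by
      have key : Tendsto (fun n : ℕ => ∏ i ∈ range (2 * α), (1 - (i : ℝ) / (2 * n))) atTop
          (nhds (∏ _i ∈ range (2 * α), (1 : ℝ))) := by
        apply tendsto_finset_prod
        intro i _
        have hd : Tendsto (fun n : ℕ => (i : ℝ) / (2 * n)) atTop (nhds 0) :=
          Tendsto.div_atTop tendsto_const_nhds
            (Tendsto.const_mul_atTop two_pos tendsto_natCast_atTop_atTop)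
        simpa using tendsto_const_nhds.sub hd
      simpa using key
    have := ((tendsto_const_nhds (x := c)).mul (h1.pow 2)).div h2 (by norm_num)
    simp only [one_pow, mul_one, div_one] at this
    exact this
  apply hmain.congr'
  filter_upwards [eventually_ge_atTop (2 * α)] with n hn
  have hαn : α ≤ n := le_trans (by omega) hn
  have hn0 : 0 < n := by omega
  have fn : (n : ℝ) ≠ 0 := Nat.cast_ne_zero.mpr hn0.ne'
  set u := ∏ i ∈ range α, (1 - (i : ℝ) / n) with hu
  set v := ∏ i ∈ range (2 * α), (1 - (i : ℝ) / (2 * n)) with hv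
  have hvpos : 0 < v := by
    rw [hv]
    apply Finset.prod_pos
    intro i hi
    have hi2 : (i : ℝ) < 2 * n := by
      have : i < 2 * α := mem_range.mp hi
      have : i < 2 * n := by omega
      exact_mod_cast this
    have h2n : (0 : ℝ) < 2 * n := by positivity
    rw [sub_pos, div_lt_one h2n]
    exact hi2
  have hfα : (Nat.factorial α : ℝ) ≠ 0 := by positivity
  have hf2α : (Nat.factorial (2 * α) : ℝ) ≠ 0 := by positivity
  have hch1 : (n.choose α : ℝ) = ((n : ℝ) ^ α * u) / (Nat.factorial α : ℝ) := by
    rw [hu, eq_div_iff hfα, choose_cast_mul n α hαn, prod_factor_out α (n : ℝ) fn]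
  have hch2 : ((2 * n).choose (2 * α) : ℝ)
      = ((2 * (n : ℝ)) ^ (2 * α) * v) / (Nat.factorial (2 * α) : ℝ) := by
    have hx : ((2 * n : ℕ) : ℝ) ≠ 0 := by
      have : (0:ℕ) < 2 * n := by omega
      exact_mod_cast this.ne'
    rw [hv, eq_div_iff hf2α, choose_cast_mul (2 * n) (2 * α) (by omega),
      prod_factor_out (2 * α) ((2 * n : ℕ) : ℝ) hx]
    push_cast
    ring
  have e3 : ((2 * α).choose α : ℝ) * (Nat.factorial α : ℝ) * (Nat.factorial α : ℝ) = (Nat.factorial (2 * α) : ℝ) := by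
    have h := Nat.choose_mul_factorial_mul_factorial (show α ≤ 2 * α by omega)
    have h2 : 2 * α - α = α := by omega
    rw [h2] at h
    exact_mod_cast h
  rw [hc, hch1, hch2, ← e3]
  have hC : ((2 * α).choose α : ℝ) ≠ 0 := by
    have := Nat.choose_pos (show α ≤ 2 * α by omega)
    positivity
  field_simp
  ring
end

section
/- Let a, L, β be natural numbers with β ≥ 2, and let g be a natural number with g ≥ C(a,β). If L < a, then g·C(L,2) - C(a,2)·C(L,β) ≥ 0. -/
theorem stmt_9 (a L β g : ℕ) (hβ : 2 ≤ β) (hg : a.choose β ≤ g) (hL : L < a) :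
    0 ≤ (g : ℤ) * L.choose 2 - (a.choose 2 : ℤ) * L.choose β := by
  rw [sub_nonneg]
  have key : a.choose 2 * L.choose β ≤ a.choose β * L.choose 2 := by
    rcases lt_or_ge L β with h | h
    · simp [Nat.choose_eq_zero_of_lt h]
    · -- β ≤ L < a
      have hβL : β ≤ L := h
      have hβa : β ≤ a := le_of_lt (lt_of_le_of_lt h hL)
      have h1 : L.choose β * β.choose 2 = L.choose 2 * (L - 2).choose (β - 2) :=
        Nat.choose_mul hβ
      have h2 : a.choose β * β.choose 2 = a.choose 2 * (a - 2).choose (β - 2) :=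
        Nat.choose_mul hβ
      have hpos : 0 < β.choose 2 := Nat.choose_pos hβ
      have : a.choose 2 * L.choose β * β.choose 2 ≤ a.choose β * L.choose 2 * β.choose 2 := by
        calc a.choose 2 * L.choose β * β.choose 2
            = a.choose 2 * (L.choose β * β.choose 2) := by ring
          _ = a.choose 2 * (L.choose 2 * (L - 2).choose (β - 2)) := by rw [h1]
          _ ≤ a.choose 2 * (L.choose 2 * (a - 2).choose (β - 2)) := by
              exact Nat.mul_le_mul_left _ (Nat.mul_le_mul_left _
                (Nat.choose_le_choose _ (Nat.sub_le_sub_right hL.le 2)))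
          _ = a.choose β * β.choose 2 * L.choose 2 := by rw [h2]; ring
          _ = a.choose β * L.choose 2 * β.choose 2 := by ring
      exact Nat.le_of_mul_le_mul_right this hpos
  have := le_trans key (Nat.mul_le_mul_right _ hg)
  exact_mod_cast this
end

section
/- For a fixed integer β ≥ 1 and ξ = 2/(β+2), the limit as n → ∞ of C(⌈ξn⌉,2)·C(⌊(1-ξ)n⌋,β) / C(n,β+2) equals C(β+2,2)·ξ²·(1-ξ)^β = C(β+2,2)·(2/(β+2))²·(β/(β+2))^β. -/
open Filter Finset

lemma aux_choose (k : ℕ) (a : ℕ → ℕ) (c : ℝ) (hc : 0 < c)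
    (h : Tendsto (fun n => (a n : ℝ) / n) atTop (nhds c)) :
    Tendsto (fun n => ((a n).choose k : ℝ) / (n : ℝ) ^ k) atTop
      (nhds (c ^ k / (k.factorial : ℝ))) := by
  have ha : Tendsto (fun n => (a n : ℝ)) atTop atTop := by
    have h2 : Tendsto (fun n : ℕ => ((a n : ℝ) / n) * n) atTop atTop :=
      h.pos_mul_atTop hc tendsto_natCast_atTop_atTop
    refine h2.congr' ?_
    filter_upwards [eventually_ge_atTop 1] with n hn
    have : (n : ℝ) ≠ 0 := by positivity
    field_simp
  have hak : ∀ᶠ n in atTop, k ≤ a n := by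
    filter_upwards [ha.eventually_ge_atTop (k : ℝ)] with n hn
    exact_mod_cast hn
  have hprod : Tendsto (fun n => ∏ i ∈ range k, (((a n : ℝ) - i) / n)) atTop
      (nhds (c ^ k)) := by
    have hfactor : ∀ i : ℕ, Tendsto (fun n : ℕ => ((a n : ℝ) - i) / n) atTop (nhds (c - 0)) := by
      intro i
      exact (h.sub (tendsto_const_div_atTop_nhds_zero_nat (i : ℝ))).congr
        (fun n => (sub_div _ _ _).symm)
    simpa using tendsto_finset_prod (range k) (fun i _ => hfactor i)
  refine (hprod.div_const (k.factorial : ℝ)).congr' ?_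
  filter_upwards [hak, eventually_ge_atTop 1] with n hk hn
  have hn0 : (n : ℝ) ≠ 0 := by positivity
  have hcast : ((a n).choose k : ℝ) = (∏ i ∈ range k, ((a n : ℝ) - i)) / (k.factorial : ℝ) := by
    rw [Nat.choose_eq_descFactorial_div_factorial,
      Nat.cast_div (Nat.factorial_dvd_descFactorial _ _)
        (by exact_mod_cast (Nat.factorial_pos k).ne')]
    congr 1
    rw [Nat.descFactorial_eq_prod_range, Nat.cast_prod]
    refine Finset.prod_congr rfl fun i hi => ?_
    rw [Nat.cast_sub (le_of_lt (lt_of_lt_of_le (mem_range.mp hi) hk))]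
  rw [prod_div_distrib, prod_const, card_range, hcast, div_div, div_div, mul_comm]

lemma aux_ceil (c : ℝ) (hc : 0 ≤ c) :
    Tendsto (fun n : ℕ => ((⌈c * n⌉₊ : ℝ)) / n) atTop (nhds c) := by
  have hupper : Tendsto (fun n : ℕ => c + 1 / (n : ℝ)) atTop (nhds c) := by
    simpa using tendsto_const_nhds.add (tendsto_const_div_atTop_nhds_zero_nat (1:ℝ))
  refine tendsto_of_tendsto_of_tendsto_of_le_of_le' tendsto_const_nhds hupper ?_ ?_
  · filter_upwards [eventually_ge_atTop 1] with n hn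
    have hn0 : (0:ℝ) < n := by exact_mod_cast hn
    rw [le_div_iff₀ hn0]
    exact Nat.le_ceil _
  · filter_upwards [eventually_ge_atTop 1] with n hn
    have hn0 : (0:ℝ) < n := by exact_mod_cast hn
    rw [div_le_iff₀ hn0]
    calc (⌈c * n⌉₊ : ℝ) ≤ c * n + 1 :=
          (Nat.ceil_lt_add_one (by positivity : (0:ℝ) ≤ c * n)).le
      _ = (c + 1/n) * n := by field_simp

lemma aux_floor (c : ℝ) (hc : 0 ≤ c) :
    Tendsto (fun n : ℕ => ((⌊c * n⌋₊ : ℝ)) / n) atTop (nhds c) := by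
  have hlower : Tendsto (fun n : ℕ => c - 1 / (n : ℝ)) atTop (nhds c) := by
    simpa using tendsto_const_nhds.sub (tendsto_const_div_atTop_nhds_zero_nat (1:ℝ))
  refine tendsto_of_tendsto_of_tendsto_of_le_of_le' hlower tendsto_const_nhds ?_ ?_
  · filter_upwards [eventually_ge_atTop 1] with n hn
    have hn0 : (0:ℝ) < n := by exact_mod_cast hn
    rw [le_div_iff₀ hn0]
    calc (c - 1/n) * n = c * n - 1 := by field_simp
      _ ≤ ⌊c * n⌋₊ := (Nat.sub_one_lt_floor (c * n)).le
  · filter_upwards [eventually_ge_atTop 1] with n hn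
    have hn0 : (0:ℝ) < n := by exact_mod_cast hn
    rw [div_le_iff₀ hn0]
    exact Nat.floor_le (by positivity)

theorem stmt_12 (β : ℕ) (hβ : 1 ≤ β) :
    Filter.Tendsto
      (fun n : ℕ =>
        ((Nat.ceil ((2 / ((β : ℝ) + 2)) * n)).choose 2 : ℝ) *
          ((Nat.floor ((1 - 2 / ((β : ℝ) + 2)) * n)).choose β : ℝ) / (n.choose (β + 2)))
      Filter.atTop
      (nhds (((β + 2).choose 2 : ℝ) * (2 / ((β : ℝ) + 2)) ^ 2 * ((β : ℝ) / ((β : ℝ) + 2)) ^ β)) := by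
  set ξ : ℝ := 2 / ((β : ℝ) + 2) with hξdef
  have hβ2 : (0:ℝ) < (β : ℝ) + 2 := by positivity
  have hξpos : 0 < ξ := by positivity
  have hβpos : (0:ℝ) < (β : ℝ) := by exact_mod_cast hβ
  have h1ξ : 1 - ξ = (β : ℝ) / ((β : ℝ) + 2) := by
    rw [hξdef]; field_simp; ring
  have h1ξpos : 0 < 1 - ξ := by rw [h1ξ]; positivity
  have h1 := aux_choose 2 (fun n => ⌈ξ * n⌉₊) ξ hξpos (aux_ceil ξ hξpos.le)
  have h2 := aux_choose β (fun n => ⌊(1 - ξ) * n⌋₊) (1 - ξ) h1ξpos (aux_floor _ h1ξpos.le)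
  have h3 : Tendsto (fun n : ℕ => ((n.choose (β+2)) : ℝ) / (n:ℝ) ^ (β+2)) atTop
      (nhds ((1:ℝ) ^ (β+2) / ((β+2).factorial : ℝ))) := by
    refine aux_choose (β+2) (fun n => n) 1 one_pos ?_
    refine Tendsto.congr' ?_ tendsto_const_nhds
    filter_upwards [eventually_ge_atTop 1] with n hn
    have hn0 : (n:ℝ) ≠ 0 := by positivity
    field_simp
  have hfacβ : ((β).factorial : ℝ) ≠ 0 := by exact_mod_cast (Nat.factorial_pos _).ne'
  have hfac : ((β+2).factorial : ℝ) ≠ 0 := by exact_mod_cast (Nat.factorial_pos _).ne'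
  have hlim := (h1.mul h2).div h3 (by
    simp only [one_pow]
    positivity)
  have hev : (fun n : ℕ =>
        ((⌈ξ * n⌉₊).choose 2 : ℝ) * ((⌊(1-ξ) * n⌋₊).choose β : ℝ) / (n.choose (β+2)))
      =ᶠ[atTop] fun n =>
        (((⌈ξ * n⌉₊).choose 2 : ℝ) / (n:ℝ)^2) * (((⌊(1-ξ) * n⌋₊).choose β : ℝ) / (n:ℝ)^β) /
          (((n.choose (β+2)) : ℝ) / (n:ℝ)^(β+2)) := by
    filter_upwards [eventually_ge_atTop (β+2)] with n hn
    have hn1 : 1 ≤ n := by omega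
    have hn0 : (n:ℝ) ≠ 0 := by positivity
    have hC : (0:ℝ) < (n.choose (β+2) : ℝ) := by exact_mod_cast Nat.choose_pos hn
    field_simp
    ring
  have hlim2 := hlim.congr' hev.symm
  have hkey : ((β+2).choose 2 : ℝ) * 2 * (β.factorial : ℝ) = ((β+2).factorial : ℝ) := by
    have h := Nat.choose_mul_factorial_mul_factorial (show 2 ≤ β + 2 by omega)
    rw [Nat.add_sub_cancel] at h
    exact_mod_cast h
  have hval : ξ ^ 2 / ((2:ℕ).factorial : ℝ) * ((1 - ξ) ^ β / (β.factorial : ℝ)) /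
      ((1:ℝ) ^ (β+2) / ((β+2).factorial : ℝ)) =
      (((β + 2).choose 2 : ℕ) : ℝ) * ξ ^ 2 * ((β : ℝ) / ((β : ℝ) + 2)) ^ β := by
    rw [h1ξ] at *
    have hC2 : (((β+2).choose 2 : ℕ) : ℝ) = ((β+2).factorial : ℝ) / (2 * (β.factorial : ℝ)) := by
      rw [eq_div_iff (by positivity)]
      linear_combination hkey
    rw [hC2]
    norm_num [Nat.factorial]
    field_simp
  rw [hval] at hlim2
  exact hlim2
end

section
/- For every fixed integer β ≥ 1, the sequence a_n = max_{0 ≤ x ≤ n} C(x,2)·C(n-x,β) / C(n,β+2) converges, and its limit equals C(β+2,2)·(2/(β+2))²·(β/(β+2))^β. -/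
open Filter Finset


lemma chooseR_le (m k : ℕ) : (m.choose k : ℝ) ≤ (m : ℝ) ^ k / k.factorial := by
  rw [le_div_iff₀ (by positivity)]
  have h : k.factorial * m.choose k ≤ m ^ k :=
    (Nat.descFactorial_eq_factorial_mul_choose m k) ▸ Nat.descFactorial_le_pow m k
  calc (m.choose k : ℝ) * k.factorial = ((k.factorial * m.choose k : ℕ) : ℝ) := by
        push_cast; ring
    _ ≤ ((m ^ k : ℕ) : ℝ) := by exact_mod_cast h
    _ = (m : ℝ) ^ k := by push_cast; ring

lemma chooseR_ge (m k : ℕ) (h : k ≤ m) :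
    ((m : ℝ) - k + 1) ^ k / k.factorial ≤ (m.choose k : ℝ) := by
  rw [div_le_iff₀ (by positivity)]
  have h1 : (m + 1 - k) ^ k ≤ k.factorial * m.choose k :=
    (Nat.descFactorial_eq_factorial_mul_choose m k) ▸ Nat.pow_sub_le_descFactorial m k
  have hc : ((m + 1 - k : ℕ) : ℝ) = (m : ℝ) - k + 1 := by
    have : k ≤ m + 1 := h.trans (Nat.le_succ m)
    push_cast [Nat.cast_sub this]; ring
  calc ((m : ℝ) - k + 1) ^ k = (((m + 1 - k) ^ k : ℕ) : ℝ) := by rw [← hc]; push_cast; ring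
    _ ≤ ((k.factorial * m.choose k : ℕ) : ℝ) := by exact_mod_cast h1
    _ = (m.choose k : ℝ) * k.factorial := by push_cast; ring


lemma amgm_key (β : ℕ) (hβ : 1 ≤ β) {t : ℝ} (h0 : 0 ≤ t) (h1 : t ≤ 1) :
    t ^ 2 * (1 - t) ^ β ≤ (2 / ((β : ℝ) + 2)) ^ 2 * ((β : ℝ) / ((β : ℝ) + 2)) ^ β := by
  have hBpos : (0 : ℝ) < (β : ℝ) + 2 := by positivity
  have hβpos : (0 : ℝ) < (β : ℝ) := by exact_mod_cast hβ
  have ht1 : 0 ≤ 1 - t := by linarith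
  have hp₁0 : 0 ≤ ((β : ℝ) + 2) * t / 2 := by positivity
  have hp₂0 : 0 ≤ ((β : ℝ) + 2) * (1 - t) / β := by positivity
  have hw : 2 / ((β : ℝ) + 2) + (β : ℝ) / ((β : ℝ) + 2) = 1 := by field_simp; ring
  have amgm := Real.geom_mean_le_arith_mean2_weighted
    (by positivity : (0:ℝ) ≤ 2 / ((β : ℝ) + 2))
    (by positivity : (0:ℝ) ≤ (β:ℝ) / ((β : ℝ) + 2)) hp₁0 hp₂0 hw
  have hr : 2 / ((β : ℝ) + 2) * (((β : ℝ) + 2) * t / 2)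
      + (β : ℝ) / ((β : ℝ) + 2) * (((β : ℝ) + 2) * (1 - t) / β) = 1 := by
    field_simp; ring
  rw [hr] at amgm
  have key : (((β : ℝ) + 2) * t / 2) ^ 2 * (((β : ℝ) + 2) * (1 - t) / β) ^ β ≤ 1 := by
    have h2 : ((((β : ℝ) + 2) * t / 2) ^ (2 / ((β : ℝ) + 2))
        * ((((β : ℝ) + 2) * (1 - t) / β) ^ ((β : ℝ) / ((β : ℝ) + 2)))) ^ ((β + 2 : ℕ) : ℝ)
        ≤ 1 :=
      Real.rpow_le_one (by positivity) amgm (by positivity)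
    rw [Real.mul_rpow (Real.rpow_nonneg hp₁0 _) (Real.rpow_nonneg hp₂0 _),
      ← Real.rpow_mul hp₁0, ← Real.rpow_mul hp₂0] at h2
    have e1 : 2 / ((β : ℝ) + 2) * ((β + 2 : ℕ) : ℝ) = ((2:ℕ):ℝ) := by
      push_cast; field_simp
    have e2 : (β : ℝ) / ((β : ℝ) + 2) * ((β + 2 : ℕ) : ℝ) = ((β:ℕ):ℝ) := by
      push_cast; field_simp
    rw [e1, e2, Real.rpow_natCast, Real.rpow_natCast] at h2
    exact_mod_cast h2
  have e3 : 2 / ((β : ℝ) + 2) * (((β : ℝ) + 2) * t / 2) = t := by field_simp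
  have e4 : (β : ℝ) / ((β : ℝ) + 2) * (((β : ℝ) + 2) * (1 - t) / β) = 1 - t := by
    field_simp
  calc t ^ 2 * (1 - t) ^ β
      = (2 / ((β : ℝ) + 2) * (((β : ℝ) + 2) * t / 2)) ^ 2
        * ((β : ℝ) / ((β : ℝ) + 2) * (((β : ℝ) + 2) * (1 - t) / β)) ^ β := by rw [e3, e4]
    _ = (2 / ((β : ℝ) + 2)) ^ 2 * ((β : ℝ) / ((β : ℝ) + 2)) ^ β
        * ((((β : ℝ) + 2) * t / 2) ^ 2 * (((β : ℝ) + 2) * (1 - t) / β) ^ β) := by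
        rw [mul_pow, mul_pow]; ring
    _ ≤ (2 / ((β : ℝ) + 2)) ^ 2 * ((β : ℝ) / ((β : ℝ) + 2)) ^ β * 1 :=
        mul_le_mul_of_nonneg_left key (by positivity)
    _ = (2 / ((β : ℝ) + 2)) ^ 2 * ((β : ℝ) / ((β : ℝ) + 2)) ^ β := by ring

lemma prod_le_bound (β : ℕ) (hβ : 1 ≤ β) {x n : ℕ} (hx : x ≤ n) (hn : 0 < n) :
    (x : ℝ) ^ 2 * ((n - x : ℕ) : ℝ) ^ β ≤
      (2 / ((β : ℝ) + 2)) ^ 2 * ((β : ℝ) / ((β : ℝ) + 2)) ^ β * (n : ℝ) ^ (β + 2) := by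
  have hn0 : (n : ℝ) ≠ 0 := by positivity
  have hc : ((n - x : ℕ) : ℝ) = (n : ℝ) - x := by
    rw [Nat.cast_sub hx]
  have h0 : (0:ℝ) ≤ (x : ℝ) / n := by positivity
  have h1 : (x : ℝ) / n ≤ 1 := by
    rw [div_le_one (by positivity)]; exact_mod_cast hx
  have h1t : 1 - (x : ℝ) / n = ((n : ℝ) - x) / n := by field_simp
  have e1 : ((x:ℝ)/n)*n = (x:ℝ) := div_mul_cancel₀ _ hn0
  have e2 : (((n:ℝ)-x)/n)*n = (n:ℝ)-x := div_mul_cancel₀ _ hn0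
  calc (x : ℝ) ^ 2 * ((n - x : ℕ) : ℝ) ^ β
      = (((x:ℝ)/n)*n) ^ 2 * (((((n:ℝ)-x)/n))*n) ^ β := by rw [e1, e2, hc]
    _ = (((x:ℝ)/n) ^ 2 * (1 - (x:ℝ)/n) ^ β) * (n : ℝ) ^ (β + 2) := by
        rw [h1t, mul_pow, mul_pow, pow_add]; ring
    _ ≤ (2 / ((β : ℝ) + 2)) ^ 2 * ((β : ℝ) / ((β : ℝ) + 2)) ^ β * (n : ℝ) ^ (β + 2) := by
        apply mul_le_mul_of_nonneg_right (amgm_key β hβ h0 h1) (by positivity)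

set_option maxHeartbeats 1000000 in
theorem stmt_13 (β : ℕ) (hβ : 1 ≤ β) :
    Filter.Tendsto
      (fun n : ℕ =>
        (((Finset.range (n + 1)).sup (fun x => x.choose 2 * (n - x).choose β) : ℕ) : ℝ) /
          (n.choose (β + 2)))
      Filter.atTop
      (nhds (((β + 2).choose 2 : ℝ) * (2 / ((β : ℝ) + 2)) ^ 2 * ((β : ℝ) / ((β : ℝ) + 2)) ^ β)) := by
  set c : ℝ := ((β + 2).choose 2 : ℝ) with hc
  set D : ℝ := ((β : ℝ) + 2) ^ 2 with hD
  set P : ℝ := c * (2 / ((β : ℝ) + 2)) ^ 2 * ((β : ℝ) / ((β : ℝ) + 2)) ^ β with hP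
  set g : ℕ → ℝ := fun n =>
    c * ((2 - D / n) / ((β : ℝ) + 2)) ^ 2 * (((β : ℝ) - D / n) / ((β : ℝ) + 2)) ^ β with hg
  set h : ℕ → ℝ := fun n => P * ((1 - ((β : ℝ) + 1) / n)⁻¹) ^ (β + 2) with hh
  have hgt : Tendsto g atTop (nhds P) := by
    have hDt : Tendsto (fun n : ℕ => D / (n : ℝ)) atTop (nhds 0) :=
      tendsto_const_div_atTop_nhds_zero_nat D
    have t1 : Tendsto (fun n : ℕ => (2 - D / n) / ((β : ℝ) + 2)) atTop
        (nhds (2 / ((β : ℝ) + 2))) := by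
      have := ((tendsto_const_nhds (x := (2:ℝ))).sub hDt).div_const ((β : ℝ) + 2)
      simpa using this
    have t2 : Tendsto (fun n : ℕ => ((β : ℝ) - D / n) / ((β : ℝ) + 2)) atTop
        (nhds ((β : ℝ) / ((β : ℝ) + 2))) := by
      have := ((tendsto_const_nhds (x := (β:ℝ))).sub hDt).div_const ((β : ℝ) + 2)
      simpa using this
    exact (tendsto_const_nhds.mul (t1.pow 2)).mul (t2.pow β)
  have hht : Tendsto h atTop (nhds P) := by
    have h2 : Tendsto (fun n : ℕ => ((β : ℝ) + 1) / n) atTop (nhds 0) :=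
      tendsto_const_div_atTop_nhds_zero_nat _
    have h3 : Tendsto (fun n : ℕ => (1 - ((β : ℝ) + 1) / n)⁻¹) atTop (nhds 1) := by
      have := ((tendsto_const_nhds (x := (1:ℝ))).sub h2).inv₀ (by norm_num : (1 : ℝ) - 0 ≠ 0)
      simpa using this
    have := (tendsto_const_nhds (x := P)).mul (h3.pow (β + 2))
    simpa [hh, inv_pow] using this
  refine tendsto_of_tendsto_of_tendsto_of_le_of_le' hgt hht ?_ ?_
  · -- lower bound : g n ≤ a n eventually
    have hc2 : c = ((β : ℝ) + 2) * ((β : ℝ) + 1) / 2 := by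
      rw [hc, Nat.cast_choose_two]; push_cast; ring
    have hfact : (((β + 2).factorial : ℕ) : ℝ)
        = ((β : ℝ) + 2) * ((β : ℝ) + 1) * (β.factorial : ℝ) := by
      rw [Nat.factorial_succ, Nat.factorial_succ]; push_cast; ring
    have hβR : (1 : ℝ) ≤ (β : ℝ) := by exact_mod_cast hβ
    have hβf : (0 : ℝ) < (β.factorial : ℝ) := by exact_mod_cast β.factorial_pos
    have hBpos : (0 : ℝ) < (β : ℝ) + 2 := by positivity
    filter_upwards [eventually_ge_atTop ((β + 2) * (β + 2))] with n hn
    have hnb : β + 2 ≤ n := le_trans (Nat.le_mul_of_pos_left _ (by omega)) hn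
    have hn0 : 0 < n := by omega
    have hnne : (n : ℝ) ≠ 0 := by positivity
    have hnposR : (0 : ℝ) < (n : ℝ) := by positivity
    have hC : (0 : ℝ) < (n.choose (β + 2) : ℕ) := by exact_mod_cast Nat.choose_pos hnb
    set x₀ : ℕ := 2 * n / (β + 2) with hx₀
    -- nat facts about x₀
    have hup : (β + 2) * x₀ ≤ 2 * n := by
      calc (β + 2) * x₀ = x₀ * (β + 2) := Nat.mul_comm _ _
        _ ≤ 2 * n := Nat.div_mul_le_self _ _
    have hx₀n : x₀ ≤ n := by
      have h1 : (β + 2) * x₀ ≤ (β + 2) * n := by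
        calc (β + 2) * x₀ ≤ 2 * n := hup
          _ ≤ (β + 2) * n := Nat.mul_le_mul_right n (by omega)
      exact Nat.le_of_mul_le_mul_left h1 (by omega)
    have h2x₀ : 2 ≤ x₀ := by
      rw [hx₀, Nat.le_div_iff_mul_le (by omega : 0 < β + 2)]
      omega
    have hx₀β : x₀ + β ≤ n := by
      have h2 : β * (β + 2) ≤ β * n := Nat.mul_le_mul_left β hnb
      have h1 : (β + 2) * (x₀ + β) ≤ (β + 2) * n := by
        calc (β + 2) * (x₀ + β) = (β + 2) * x₀ + β * (β + 2) := by ring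
          _ ≤ 2 * n + β * n := Nat.add_le_add hup h2
          _ = (β + 2) * n := by ring
      exact Nat.le_of_mul_le_mul_left h1 (by omega)
    have hβnx : β ≤ n - x₀ := by omega
    -- real facts
    have hcastnx : ((n - x₀ : ℕ) : ℝ) = (n : ℝ) - (x₀ : ℝ) := by
      rw [Nat.cast_sub hx₀n]
    have hDn : D ≤ (n : ℝ) := by
      rw [hD]
      calc ((β : ℝ) + 2) ^ 2 = (((β + 2) * (β + 2) : ℕ) : ℝ) := by push_cast; ring
        _ ≤ (n : ℝ) := by exact_mod_cast hn
    have rx₀ : 2 * (n : ℝ) - ((β : ℝ) + 1) ≤ ((β : ℝ) + 2) * (x₀ : ℝ) := by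
      have hdm : (β + 2) * x₀ + 2 * n % (β + 2) = 2 * n := Nat.div_add_mod (2 * n) (β + 2)
      have hmlt : 2 * n % (β + 2) ≤ β + 1 := by
        have := Nat.mod_lt (2 * n) (show 0 < β + 2 by omega); omega
      have h1 : (((β + 2) * x₀ : ℕ) : ℝ) + ((2 * n % (β + 2) : ℕ) : ℝ) = 2 * (n : ℝ) := by
        exact_mod_cast congrArg (Nat.cast : ℕ → ℝ) hdm
      have h2 : ((2 * n % (β + 2) : ℕ) : ℝ) ≤ (β : ℝ) + 1 := by exact_mod_cast hmlt
      have h3 : (((β + 2) * x₀ : ℕ) : ℝ) = ((β : ℝ) + 2) * (x₀ : ℝ) := by push_cast; ring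
      linarith [h1, h2, h3.symm.le, h3.le]
    have rx₀up : ((β : ℝ) + 2) * (x₀ : ℝ) ≤ 2 * (n : ℝ) := by
      calc ((β : ℝ) + 2) * (x₀ : ℝ) = (((β + 2) * x₀ : ℕ) : ℝ) := by push_cast; ring
        _ ≤ 2 * (n : ℝ) := by exact_mod_cast hup
    have hD1 : 2 * (β : ℝ) + 3 ≤ D := by
      rw [hD]; nlinarith [sq_nonneg ((β : ℝ) + 1)]
    have hD2 : (β : ℝ) ^ 2 + (β : ℝ) - 2 ≤ D := by
      rw [hD]; nlinarith
    -- the two key real bounds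
    have hA0 : (0 : ℝ) ≤ (2 * (n : ℝ) - D) / ((β : ℝ) + 2) := by
      apply div_nonneg _ hBpos.le; linarith
    have hnβn : (n : ℝ) ≤ (β : ℝ) * n := le_mul_of_one_le_left hnposR.le hβR
    have hB0 : (0 : ℝ) ≤ ((β : ℝ) * (n : ℝ) - D) / ((β : ℝ) + 2) := by
      apply div_nonneg _ hBpos.le; linarith [hDn, hnβn]
    have hA : (2 * (n : ℝ) - D) / ((β : ℝ) + 2) ≤ (x₀ : ℝ) - 2 + 1 := by
      rw [div_le_iff₀ hBpos]; linarith [rx₀, hD1]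
    have hB : ((β : ℝ) * (n : ℝ) - D) / ((β : ℝ) + 2) ≤ ((n - x₀ : ℕ) : ℝ) - (β : ℝ) + 1 := by
      rw [hcastnx, div_le_iff₀ hBpos]; linarith [rx₀up, hD2]
    -- choose bounds
    have cb1 : ((2 * (n : ℝ) - D) / ((β : ℝ) + 2)) ^ 2 / 2 ≤ (x₀.choose 2 : ℝ) := by
      have h1 := chooseR_ge x₀ 2 h2x₀
      norm_num [Nat.factorial_two] at h1
      calc ((2 * (n : ℝ) - D) / ((β : ℝ) + 2)) ^ 2 / 2
          ≤ ((x₀ : ℝ) - 2 + 1) ^ 2 / 2 := by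
            apply div_le_div_of_nonneg_right _ (by norm_num)
            exact pow_le_pow_left₀ hA0 hA 2
        _ ≤ (x₀.choose 2 : ℝ) := h1
    have cb2 : (((β : ℝ) * (n : ℝ) - D) / ((β : ℝ) + 2)) ^ β / (β.factorial : ℝ)
        ≤ ((n - x₀).choose β : ℝ) := by
      have h1 := chooseR_ge (n - x₀) β hβnx
      calc (((β : ℝ) * (n : ℝ) - D) / ((β : ℝ) + 2)) ^ β / (β.factorial : ℝ)
          ≤ (((n - x₀ : ℕ) : ℝ) - (β : ℝ) + 1) ^ β / (β.factorial : ℝ) := by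
            apply div_le_div_of_nonneg_right _ hβf.le
            exact pow_le_pow_left₀ hB0 hB β
        _ ≤ ((n - x₀).choose β : ℝ) := h1
    -- denominator bound
    have den1 : (n.choose (β + 2) : ℝ) ≤ (n : ℝ) ^ (β + 2) / (((β + 2).factorial : ℕ) : ℝ) :=
      chooseR_le n (β + 2)
    -- sup bound
    have hsup : ((x₀.choose 2 * (n - x₀).choose β : ℕ) : ℝ) ≤
        (((range (n + 1)).sup (fun x => x.choose 2 * (n - x).choose β) : ℕ) : ℝ) := by
      exact_mod_cast Nat.cast_le.2 (Finset.le_sup (f := fun x : ℕ => x.choose 2 * (n - x).choose β)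
        (mem_range.2 (by omega : x₀ < n + 1)))
    -- assemble
    have key : g n ≤ ((x₀.choose 2 * (n - x₀).choose β : ℕ) : ℝ) / (n.choose (β + 2) : ℕ) := by
      have geq : g n = (((2 * (n : ℝ) - D) / ((β : ℝ) + 2)) ^ 2 / 2
            * ((((β : ℝ) * (n : ℝ) - D) / ((β : ℝ) + 2)) ^ β / (β.factorial : ℝ)))
          / ((n : ℝ) ^ (β + 2) / (((β + 2).factorial : ℕ) : ℝ)) := by
        have e0 : (2 * (n : ℝ) - D) / n = 2 - D / n := by
          rw [sub_div, mul_div_assoc, div_self hnne, mul_one]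
        have e0' : ((β : ℝ) * (n : ℝ) - D) / n = (β : ℝ) - D / n := by
          rw [sub_div, mul_div_assoc, div_self hnne, mul_one]
        have eA : (2 - D / (n : ℝ)) / ((β : ℝ) + 2)
            = ((2 * (n : ℝ) - D) / ((β : ℝ) + 2)) / (n : ℝ) := by
          rw [div_right_comm, e0]
        have eB : ((β : ℝ) - D / (n : ℝ)) / ((β : ℝ) + 2)
            = (((β : ℝ) * (n : ℝ) - D) / ((β : ℝ) + 2)) / (n : ℝ) := by
          rw [div_right_comm, e0']
        show c * ((2 - D / (n : ℝ)) / ((β : ℝ) + 2)) ^ 2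
            * (((β : ℝ) - D / (n : ℝ)) / ((β : ℝ) + 2)) ^ β = _
        rw [eA, eB, div_pow ((2 * (n : ℝ) - D) / ((β : ℝ) + 2)) (n : ℝ) 2,
          div_pow (((β : ℝ) * (n : ℝ) - D) / ((β : ℝ) + 2)) (n : ℝ) β, pow_add, hc2, hfact]
        generalize (((β : ℝ) * (n : ℝ) - D) / ((β : ℝ) + 2)) ^ β = b
        generalize hm : ((n : ℝ)) ^ β = m
        have hm0 : m ≠ 0 := hm ▸ pow_ne_zero β hnne
        have hβ1 : ((β : ℝ) + 1) ≠ 0 := by positivity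
        field_simp [hm0, hβf.ne', hBpos.ne', hβ1]
      rw [geq]
      apply div_le_div₀ (by positivity) _ (by positivity) den1
      push_cast
      apply mul_le_mul cb1 cb2 (by positivity) (by positivity)
    exact key.trans ((div_le_div_iff_of_pos_right hC).2 hsup)
  · -- upper bound : a n ≤ h n eventually
    have hc2 : c = ((β : ℝ) + 2) * ((β : ℝ) + 1) / 2 := by
      rw [hc, Nat.cast_choose_two]; push_cast; ring
    have hfact : (((β + 2).factorial : ℕ) : ℝ)
        = ((β : ℝ) + 2) * ((β : ℝ) + 1) * (β.factorial : ℝ) := by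
      rw [Nat.factorial_succ, Nat.factorial_succ]; push_cast; ring
    filter_upwards [eventually_ge_atTop ((β + 2) * (β + 2))] with n hn
    have hnb : β + 2 ≤ n := le_trans (Nat.le_mul_of_pos_left _ (by omega)) hn
    have hn0 : 0 < n := by omega
    have hnne : (n : ℝ) ≠ 0 := by positivity
    have hC : (0 : ℝ) < (n.choose (β + 2) : ℕ) := by exact_mod_cast Nat.choose_pos hnb
    have hnR : ((β : ℝ) + 1) < (n : ℝ) := by exact_mod_cast (by omega : β + 1 < n)
    have hnd : (0 : ℝ) < (n : ℝ) - ((β : ℝ) + 1) := by linarith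
    obtain ⟨x, hxmem, hsup⟩ := Finset.exists_mem_eq_sup (range (n + 1))
      ⟨0, mem_range.2 (Nat.succ_pos n)⟩ (fun x => x.choose 2 * (n - x).choose β)
    have hx : x ≤ n := by
      have := mem_range.1 hxmem; omega
    simp only [hh]
    rw [hsup]
    have hβf : (0 : ℝ) < (β.factorial : ℝ) := by exact_mod_cast β.factorial_pos
    -- numerator bound
    have num1 : ((x.choose 2 * (n - x).choose β : ℕ) : ℝ) ≤
        (2 / ((β : ℝ) + 2)) ^ 2 * ((β : ℝ) / ((β : ℝ) + 2)) ^ β * (n : ℝ) ^ (β + 2)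
          / (2 * (β.factorial : ℝ)) := by
      push_cast
      calc (x.choose 2 : ℝ) * ((n - x).choose β : ℝ)
          ≤ ((x : ℝ) ^ 2 / 2) * (((n - x : ℕ) : ℝ) ^ β / (β.factorial : ℝ)) := by
            apply mul_le_mul _ _ (by positivity) (by positivity)
            · have := chooseR_le x 2
              norm_num [Nat.factorial_two] at this
              exact this
            · exact chooseR_le (n - x) β
        _ = ((x : ℝ) ^ 2 * ((n - x : ℕ) : ℝ) ^ β) / (2 * (β.factorial : ℝ)) := by
            ring
        _ ≤ (2 / ((β : ℝ) + 2)) ^ 2 * ((β : ℝ) / ((β : ℝ) + 2)) ^ β * (n : ℝ) ^ (β + 2)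
              / (2 * (β.factorial : ℝ)) := by
            exact (div_le_div_iff_of_pos_right (by positivity)).2 (prod_le_bound β hβ hx hn0)
    -- denominator bound
    have den1 : ((n : ℝ) - ((β : ℝ) + 1)) ^ (β + 2) / (((β + 2).factorial : ℕ) : ℝ)
        ≤ (n.choose (β + 2) : ℕ) := by
      have := chooseR_ge n (β + 2) hnb
      have e : (n : ℝ) - ((β + 2 : ℕ) : ℝ) + 1 = (n : ℝ) - ((β : ℝ) + 1) := by
        push_cast; ring
      rwa [e] at this
    calc ((x.choose 2 * (n - x).choose β : ℕ) : ℝ) / (n.choose (β + 2) : ℕ)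
        ≤ ((2 / ((β : ℝ) + 2)) ^ 2 * ((β : ℝ) / ((β : ℝ) + 2)) ^ β * (n : ℝ) ^ (β + 2)
            / (2 * (β.factorial : ℝ)))
          / (((n : ℝ) - ((β : ℝ) + 1)) ^ (β + 2) / (((β + 2).factorial : ℕ) : ℝ)) := by
          apply div_le_div₀ (by positivity) num1 (by positivity) den1
      _ = P * ((1 - ((β : ℝ) + 1) / n)⁻¹) ^ (β + 2) := by
          have hinv : (1 - ((β : ℝ) + 1) / n)⁻¹ = (n : ℝ) / ((n : ℝ) - ((β : ℝ) + 1)) := by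
            rw [show (1 : ℝ) - ((β : ℝ) + 1) / n = ((n : ℝ) - ((β : ℝ) + 1)) / n by
              field_simp, inv_div]
          rw [hinv, div_pow, hP, hfact, hc2]
          have hq0 := hnd.ne'
          generalize (n : ℝ) - ((β : ℝ) + 1) = q at hq0 ⊢
          field_simp
          have hq2 : q ^ 2 * q⁻¹ ^ 2 = 1 := by rw [← mul_pow, mul_inv_cancel₀ hq0, one_pow]
          have hqb : q ^ β * q⁻¹ ^ β = 1 := by rw [← mul_pow, mul_inv_cancel₀ hq0, one_pow]
          linear_combination (-((n : ℝ) ^ 2 * (n : ℝ) ^ β)) * (q ^ β * q⁻¹ ^ β * hq2 + hqb)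
end

section
/- For integers β ≥ 2 and natural numbers A ≥ 2, L ≥ β with L < A: C(A,2)·C(L,β) ≤ C(L,2)·C(A,β). -/
theorem stmt_18 (A L β : ℕ) (hβ : 2 ≤ β) (hA : 2 ≤ A) (hL : β ≤ L) (hLA : L < A) :
    A.choose 2 * L.choose β ≤ L.choose 2 * A.choose β := by
  clear hA
  induction A, (Nat.le_of_lt hLA) using Nat.le_induction with
  | base => exact le_refl _
  | succ n hn ih =>
    have hβn : β ≤ n := hL.trans hn
    have h2n : 2 ≤ n := hβ.trans hβn
    have hpos : 0 < (n - 1) * (n + 1 - β) := by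
      apply Nat.mul_pos <;> omega
    apply Nat.le_of_mul_le_mul_right _ hpos
    have e1 : (n + 1).choose 2 * (n + 1 - 2) = n.choose 2 * (n + 1) :=
      (Nat.choose_mul_succ_eq n 2).symm
    have e2 : (n + 1).choose β * (n + 1 - β) = n.choose β * (n + 1) :=
      (Nat.choose_mul_succ_eq n β).symm
    have e1' : (n + 1).choose 2 * (n - 1) = n.choose 2 * (n + 1) := by
      rw [← e1]; congr 1
    have key : n.choose 2 * L.choose β * (n + 1 - β) ≤ L.choose 2 * n.choose β * (n - 1) :=
      Nat.mul_le_mul (by rcases Nat.lt_or_ge L n with h | h; exacts [ih h, by rw [show n = L by omega]]) (by omega)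
    calc (n + 1).choose 2 * L.choose β * ((n - 1) * (n + 1 - β))
        = ((n + 1).choose 2 * (n - 1)) * (L.choose β * (n + 1 - β)) := by ring
      _ = (n.choose 2 * (n + 1)) * (L.choose β * (n + 1 - β)) := by rw [e1']
      _ = n.choose 2 * L.choose β * (n + 1 - β) * (n + 1) := by ring
      _ ≤ L.choose 2 * n.choose β * (n - 1) * (n + 1) := Nat.mul_le_mul_right _ key
      _ = (n.choose β * (n + 1)) * (L.choose 2 * (n - 1)) := by ring
      _ = ((n + 1).choose β * (n + 1 - β)) * (L.choose 2 * (n - 1)) := by rw [e2]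
      _ = L.choose 2 * (n + 1).choose β * ((n - 1) * (n + 1 - β)) := by ring
end
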